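/- For any embedded quantum groupoid (M, C, s, t, i, ∘, 𝒮), the images of the four maps (i⊗id)DL, (id⊗i)DR, (𝒮⊗id)Δ and (id⊗𝒮)Δ (each a map M → M⊗M) are all contained in the cotensor product M□M. (Proposition 2.4(ii).) -/
import Mathlib


open TensorProduct

noncomputable section

variable (k C M : Type*) [Field k]
  [AddCommGroup C] [Module k C] [Coalgebra k C]
  [AddCommGroup M] [Module k M] [Coalgebra k M]

variable (s t : M →ₗ[k] C) (i : C →ₗ[k] M)

/-- The left coaction `DL = (t⊗id)Δ : M → C⊗M`. -/
def DLmap : M →ₗ[k] C ⊗[k] M :=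
  map t LinearMap.id ∘ₗ (Coalgebra.comul : M →ₗ[k] M ⊗[k] M)

/-- The right coaction `DR = (id⊗s)Δ : M → M⊗C`. -/
def DRmap : M →ₗ[k] M ⊗[k] C :=
  map LinearMap.id s ∘ₗ (Coalgebra.comul : M →ₗ[k] M ⊗[k] M)

/-- The cotensor product `M□M`. -/
def cot : Set (M ⊗[k] M) :=
  {x | (TensorProduct.assoc k M C M).toLinearMap (map (DRmap k C M s) LinearMap.id x)
        = map LinearMap.id (DLmap k C M t) x}

variable (circ : M ⊗[k] M →ₗ[k] M) (SS : M →ₗ[k] M)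

/-- The axioms of an embedded quantum groupoid `(M, C, s, t, i, ∘, 𝒮)`. -/
structure EmbeddedQuantumGroupoid : Prop where
  /-- `s` is comultiplicative -/
  s_comul : (Coalgebra.comul : C →ₗ[k] C ⊗[k] C) ∘ₗ s
      = map s s ∘ₗ (Coalgebra.comul : M →ₗ[k] M ⊗[k] M)
  /-- `s` is counital -/
  s_counit : (Coalgebra.counit : C →ₗ[k] k) ∘ₗ s = (Coalgebra.counit : M →ₗ[k] k)
  /-- `t` is comultiplicative -/
  t_comul : (Coalgebra.comul : C →ₗ[k] C ⊗[k] C) ∘ₗ t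
      = map t t ∘ₗ (Coalgebra.comul : M →ₗ[k] M ⊗[k] M)
  /-- `t` is counital -/
  t_counit : (Coalgebra.counit : C →ₗ[k] k) ∘ₗ t = (Coalgebra.counit : M →ₗ[k] k)
  /-- `i` is comultiplicative -/
  i_comul : (Coalgebra.comul : M →ₗ[k] M ⊗[k] M) ∘ₗ i
      = map i i ∘ₗ (Coalgebra.comul : C →ₗ[k] C ⊗[k] C)
  /-- `i` is counital -/
  i_counit : (Coalgebra.counit : M →ₗ[k] k) ∘ₗ i = (Coalgebra.counit : C →ₗ[k] k)
  /-- `s∘i = id` -/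
  si : s ∘ₗ i = LinearMap.id
  /-- `t∘i = id` -/
  ti : t ∘ₗ i = LinearMap.id
  /-- `∘` is associative -/
  circ_assoc : ∀ x y z : M,
      circ (circ (x ⊗ₜ[k] y) ⊗ₜ[k] z) = circ (x ⊗ₜ[k] circ (y ⊗ₜ[k] z))
  /-- `Δ(x∘y) = (x₁∘y₁)⊗(x₂∘y₂)` -/
  comul_circ : (Coalgebra.comul : M →ₗ[k] M ⊗[k] M) ∘ₗ circ
      = map circ circ ∘ₗ (tensorTensorTensorComm k M M M M).toLinearMap
          ∘ₗ map (Coalgebra.comul : M →ₗ[k] M ⊗[k] M) (Coalgebra.comul : M →ₗ[k] M ⊗[k] M)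
  /-- `ε(x∘y) = ε(x)ε(y)` -/
  counit_circ : (Coalgebra.counit : M →ₗ[k] k) ∘ₗ circ
      = (TensorProduct.lid k k).toLinearMap
          ∘ₗ map (Coalgebra.counit : M →ₗ[k] k) (Coalgebra.counit : M →ₗ[k] k)
  /-- unity condition `∘(id⊗i)DR = id` -/
  unit_right : circ ∘ₗ map LinearMap.id i ∘ₗ DRmap k C M s = LinearMap.id
  /-- unity condition `∘(i⊗id)DL = id` -/
  unit_left : circ ∘ₗ map i LinearMap.id ∘ₗ DLmap k C M t = LinearMap.id
  /-- source condition `s(∘x) = (ε⊗s)(x)` on `M□M` -/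
  source_cond : ∀ x ∈ cot k C M s t,
      s (circ x) = (TensorProduct.lid k C) (map (Coalgebra.counit : M →ₗ[k] k) s x)
  /-- target condition `t(∘x) = (t⊗ε)(x)` on `M□M` -/
  target_cond : ∀ x ∈ cot k C M s t,
      t (circ x) = (TensorProduct.rid k C) (map t (Coalgebra.counit : M →ₗ[k] k) x)
  /-- `(s⊗𝒮)Δ = DL∘𝒮` -/
  S_left : map s SS ∘ₗ (Coalgebra.comul : M →ₗ[k] M ⊗[k] M) = DLmap k C M t ∘ₗ SS
  /-- `(𝒮⊗t)Δ = DR∘𝒮` -/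
  S_right : map SS t ∘ₗ (Coalgebra.comul : M →ₗ[k] M ⊗[k] M) = DRmap k C M s ∘ₗ SS
  /-- `∘(𝒮⊗id)Δ = i∘s` -/
  S_antipode_left : circ ∘ₗ map SS LinearMap.id
      ∘ₗ (Coalgebra.comul : M →ₗ[k] M ⊗[k] M) = i ∘ₗ s
  /-- `∘(id⊗𝒮)Δ = i∘t` -/
  S_antipode_right : circ ∘ₗ map LinearMap.id SS
      ∘ₗ (Coalgebra.comul : M →ₗ[k] M ⊗[k] M) = i ∘ₗ t

lemma mapmap {R : Type*} [CommSemiring R] {A B P Q A' B' : Type*}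
    [AddCommMonoid A] [AddCommMonoid B] [AddCommMonoid P] [AddCommMonoid Q]
    [AddCommMonoid A'] [AddCommMonoid B']
    [Module R A] [Module R B] [Module R P] [Module R Q] [Module R A'] [Module R B']
    (f₂ : P →ₗ[R] A') (f₁ : A →ₗ[R] P) (g₂ : Q →ₗ[R] B') (g₁ : B →ₗ[R] Q)
    (x : A ⊗[R] B) :
    map f₂ g₂ (map f₁ g₁ x) = map (f₂ ∘ₗ f₁) (g₂ ∘ₗ g₁) x := by
  rw [map_comp]; rfl

lemma auxL (f : M →ₗ[k] M)
    (h : (map LinearMap.id s ∘ₗ (Coalgebra.comul : M →ₗ[k] M ⊗[k] M)) ∘ₗ f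
        = map f t ∘ₗ (Coalgebra.comul : M →ₗ[k] M ⊗[k] M)) (m : M) :
    (TensorProduct.assoc k M C M)
        (map (map LinearMap.id s ∘ₗ (Coalgebra.comul : M →ₗ[k] M ⊗[k] M)) LinearMap.id
          (map f LinearMap.id (Coalgebra.comul m)))
      = map LinearMap.id (map t LinearMap.id ∘ₗ (Coalgebra.comul : M →ₗ[k] M ⊗[k] M))
          (map f LinearMap.id (Coalgebra.comul m)) := by
  have hr : (Coalgebra.comul : M →ₗ[k] M ⊗[k] M).rTensor M
      = map Coalgebra.comul LinearMap.id := rfl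
  have hl : (Coalgebra.comul : M →ₗ[k] M ⊗[k] M).lTensor M
      = map LinearMap.id Coalgebra.comul := rfl
  calc (TensorProduct.assoc k M C M)
        (map (map LinearMap.id s ∘ₗ (Coalgebra.comul : M →ₗ[k] M ⊗[k] M)) LinearMap.id
          (map f LinearMap.id (Coalgebra.comul m)))
      = (TensorProduct.assoc k M C M)
          (map (map f t) LinearMap.id
            (map Coalgebra.comul LinearMap.id (Coalgebra.comul m))) := by
        rw [mapmap, mapmap, h]
    _ = map f (map t LinearMap.id)
          ((TensorProduct.assoc k M M M)
            (map Coalgebra.comul LinearMap.id (Coalgebra.comul m))) :=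
        (map_map_assoc _ _ _ _).symm
    _ = map f (map t LinearMap.id)
          (map LinearMap.id Coalgebra.comul (Coalgebra.comul m)) := by
        rw [← hr, Coalgebra.coassoc_apply, hl]
    _ = map LinearMap.id (map t LinearMap.id ∘ₗ (Coalgebra.comul : M →ₗ[k] M ⊗[k] M))
          (map f LinearMap.id (Coalgebra.comul m)) := by
        rw [mapmap, mapmap]; simp

lemma auxR (f : M →ₗ[k] M)
    (h : (map t LinearMap.id ∘ₗ (Coalgebra.comul : M →ₗ[k] M ⊗[k] M)) ∘ₗ f
        = map s f ∘ₗ (Coalgebra.comul : M →ₗ[k] M ⊗[k] M)) (m : M) :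
    (TensorProduct.assoc k M C M)
        (map (map LinearMap.id s ∘ₗ (Coalgebra.comul : M →ₗ[k] M ⊗[k] M)) LinearMap.id
          (map LinearMap.id f (Coalgebra.comul m)))
      = map LinearMap.id (map t LinearMap.id ∘ₗ (Coalgebra.comul : M →ₗ[k] M ⊗[k] M))
          (map LinearMap.id f (Coalgebra.comul m)) := by
  have hr : (Coalgebra.comul : M →ₗ[k] M ⊗[k] M).rTensor M
      = map Coalgebra.comul LinearMap.id := rfl
  have hl : (Coalgebra.comul : M →ₗ[k] M ⊗[k] M).lTensor M
      = map LinearMap.id Coalgebra.comul := rfl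
  calc (TensorProduct.assoc k M C M)
        (map (map LinearMap.id s ∘ₗ (Coalgebra.comul : M →ₗ[k] M ⊗[k] M)) LinearMap.id
          (map LinearMap.id f (Coalgebra.comul m)))
      = (TensorProduct.assoc k M C M)
          (map (map LinearMap.id s) f
            (map Coalgebra.comul LinearMap.id (Coalgebra.comul m))) := by
        rw [mapmap, mapmap]; simp
    _ = map LinearMap.id (map s f)
          ((TensorProduct.assoc k M M M)
            (map Coalgebra.comul LinearMap.id (Coalgebra.comul m))) :=
        (map_map_assoc _ _ _ _).symm
    _ = map LinearMap.id (map s f)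
          (map LinearMap.id Coalgebra.comul (Coalgebra.comul m)) := by
        rw [← hr, Coalgebra.coassoc_apply, hl]
    _ = map LinearMap.id (map t LinearMap.id ∘ₗ (Coalgebra.comul : M →ₗ[k] M ⊗[k] M))
          (map LinearMap.id f (Coalgebra.comul m)) := by
        rw [mapmap, mapmap, h]

/-- Proposition 2.4(ii): for any embedded quantum groupoid, the images of `(i⊗id)DL`,
`(id⊗i)DR`, `(𝒮⊗id)Δ` and `(id⊗𝒮)Δ` are contained in the cotensor product `M□M`. -/
theorem statement17 (hqg : EmbeddedQuantumGroupoid k C M s t i circ SS) :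
    ∀ m : M,
      map i LinearMap.id (DLmap k C M t m) ∈ cot k C M s t
      ∧ map LinearMap.id i (DRmap k C M s m) ∈ cot k C M s t
      ∧ map SS LinearMap.id (Coalgebra.comul m) ∈ cot k C M s t
      ∧ map LinearMap.id SS (Coalgebra.comul m) ∈ cot k C M s t := by
  have h1 : (map LinearMap.id s ∘ₗ (Coalgebra.comul : M →ₗ[k] M ⊗[k] M)) ∘ₗ (i ∘ₗ t)
      = map (i ∘ₗ t) t ∘ₗ (Coalgebra.comul : M →ₗ[k] M ⊗[k] M) := by
    calc (map LinearMap.id s ∘ₗ (Coalgebra.comul : M →ₗ[k] M ⊗[k] M)) ∘ₗ (i ∘ₗ t)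
        = map LinearMap.id s ∘ₗ (((Coalgebra.comul : M →ₗ[k] M ⊗[k] M) ∘ₗ i) ∘ₗ t) := by
          simp only [LinearMap.comp_assoc]
      _ = (map LinearMap.id s ∘ₗ map i i) ∘ₗ ((Coalgebra.comul : C →ₗ[k] C ⊗[k] C) ∘ₗ t) := by
          rw [hqg.i_comul]; simp only [LinearMap.comp_assoc]
      _ = map i LinearMap.id ∘ₗ (map t t ∘ₗ (Coalgebra.comul : M →ₗ[k] M ⊗[k] M)) := by
          rw [← map_comp, hqg.si, LinearMap.id_comp, hqg.t_comul]
      _ = map (i ∘ₗ t) t ∘ₗ (Coalgebra.comul : M →ₗ[k] M ⊗[k] M) := by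
          rw [← LinearMap.comp_assoc, ← map_comp, LinearMap.id_comp]
  have h2 : (map t LinearMap.id ∘ₗ (Coalgebra.comul : M →ₗ[k] M ⊗[k] M)) ∘ₗ (i ∘ₗ s)
      = map s (i ∘ₗ s) ∘ₗ (Coalgebra.comul : M →ₗ[k] M ⊗[k] M) := by
    calc (map t LinearMap.id ∘ₗ (Coalgebra.comul : M →ₗ[k] M ⊗[k] M)) ∘ₗ (i ∘ₗ s)
        = map t LinearMap.id ∘ₗ (((Coalgebra.comul : M →ₗ[k] M ⊗[k] M) ∘ₗ i) ∘ₗ s) := by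
          simp only [LinearMap.comp_assoc]
      _ = (map t LinearMap.id ∘ₗ map i i) ∘ₗ ((Coalgebra.comul : C →ₗ[k] C ⊗[k] C) ∘ₗ s) := by
          rw [hqg.i_comul]; simp only [LinearMap.comp_assoc]
      _ = map LinearMap.id i ∘ₗ (map s s ∘ₗ (Coalgebra.comul : M →ₗ[k] M ⊗[k] M)) := by
          rw [← map_comp, hqg.ti, LinearMap.id_comp, hqg.s_comul]
      _ = map s (i ∘ₗ s) ∘ₗ (Coalgebra.comul : M →ₗ[k] M ⊗[k] M) := by
          rw [← LinearMap.comp_assoc, ← map_comp, LinearMap.id_comp]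
  have h3 : (map LinearMap.id s ∘ₗ (Coalgebra.comul : M →ₗ[k] M ⊗[k] M)) ∘ₗ SS
      = map SS t ∘ₗ (Coalgebra.comul : M →ₗ[k] M ⊗[k] M) := by
    have h := hqg.S_right; rw [DRmap] at h; exact h.symm
  have h4 : (map t LinearMap.id ∘ₗ (Coalgebra.comul : M →ₗ[k] M ⊗[k] M)) ∘ₗ SS
      = map s SS ∘ₗ (Coalgebra.comul : M →ₗ[k] M ⊗[k] M) := by
    have h := hqg.S_left; rw [DLmap] at h; exact h.symm
  intro m
  refine ⟨?_, ?_, ?_, ?_⟩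
  · simp only [cot, Set.mem_setOf_eq, DLmap, DRmap, LinearMap.comp_apply, LinearEquiv.coe_coe]
    have e : map i LinearMap.id (map t LinearMap.id (Coalgebra.comul m))
        = map (i ∘ₗ t) LinearMap.id (Coalgebra.comul m) := by
      rw [mapmap, LinearMap.id_comp]
    rw [e]
    exact auxL k C M s t (i ∘ₗ t) h1 m
  · simp only [cot, Set.mem_setOf_eq, DLmap, DRmap, LinearMap.comp_apply, LinearEquiv.coe_coe]
    have e : map LinearMap.id i (map LinearMap.id s (Coalgebra.comul m))
        = map LinearMap.id (i ∘ₗ s) (Coalgebra.comul m) := by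
      rw [mapmap, LinearMap.id_comp]
    rw [e]
    exact auxR k C M s t (i ∘ₗ s) h2 m
  · simp only [cot, Set.mem_setOf_eq, DLmap, DRmap, LinearMap.comp_apply, LinearEquiv.coe_coe]
    exact auxL k C M s t SS h3 m
  · simp only [cot, Set.mem_setOf_eq, DLmap, DRmap, LinearMap.comp_apply, LinearEquiv.coe_coe]
    exact auxR k C M s t SS h4 m

end
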